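/- arXiv:2601.12592 — 8 statements merged into one kernel-verified Lean document; each statement's English description precedes it below -/
import Mathlib

section
/- If the drinker paradox holds for the natural numbers (i.e., for every predicate P on ℕ there exists n such that P n implies ∀ m, P m), then the limited principle of omniscience holds (i.e., for every f : ℕ → Bool, either ∃ n, f n = true or ∀ n, f n = false). -/
theorem stmt_0
    (dp : ∀ P : ℕ → Prop, ∃ n, (P n → ∀ m, P m)) :
    ∀ f : ℕ → Bool, (∃ n, f n = true) ∨ (∀ n, f n = false) := by
  intro f
  obtain ⟨n, hn⟩ := dp (fun n => f n = false)
  cases h : f n with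
  | true => exact Or.inl ⟨n, h⟩
  | false => exact Or.inr (hn h)
end

section
/- For any types A and B, the blurred existence principle BEP^B_A is equivalent to the blurred independence of premise BIP^B_A. -/
theorem stmt_8 (A B : Type*) :
    (∀ P : A → Prop, ∃ f : B → A, ((∃ x, P x) → ∃ y, P (f y))) ↔
    (∀ (P : A → Prop) (p : Prop), (p → ∃ x, P x) → ∃ f : B → A, (p → ∃ y, P (f y))) := by
  constructor
  · intro h P p hp
    obtain ⟨f, hf⟩ := h P
    exact ⟨f, fun hpp => hf (hp hpp)⟩
  · intro h P
    exact h P (∃ x, P x) id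
end

section
/- The countably blurred existence principle over all inhabited types implies Kripke's schema: if BEP^ℕ_A holds for all inhabited A, then for every proposition p there exists f : ℕ → Bool with p ↔ ∃ n, f n = true. -/
theorem stmt_9
    (bep : ∀ (A : Type) [Inhabited A] (P : A → Prop),
      ∃ f : ℕ → A, ((∃ x, P x) → ∃ n, P (f n))) :
    ∀ p : Prop, ∃ f : ℕ → Bool, (p ↔ ∃ n, f n = true) := by
  intro p
  have : Inhabited {b : Bool // b = false ∨ p} := ⟨⟨false, Or.inl rfl⟩⟩
  obtain ⟨g, hg⟩ := bep {b : Bool // b = false ∨ p} (fun x => x.1 = true)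
  refine ⟨fun n => (g n).1, ?_, ?_⟩
  · intro hp
    exact hg ⟨⟨true, Or.inr hp⟩, rfl⟩
  · rintro ⟨n, hn⟩
    rcases (g n).2 with h | h
    · simp only [] at hn; rw [hn] at h; exact absurd h (by simp)
    · exact h
end

section
/- The conjunction of the countably blurred existence principle (over all inhabited types) and Markov's principle implies the law of excluded middle. -/
theorem stmt_10
    (bep : ∀ (A : Type) [Inhabited A] (P : A → Prop),
      ∃ f : ℕ → A, ((∃ x, P x) → ∃ n, P (f n)))
    (mp : ∀ f : ℕ → Bool, ¬¬(∃ n, f n = true) → ∃ n, f n = true) :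
    ∀ p : Prop, p ∨ ¬p := by
  have dne : ∀ q : Prop, ¬¬q → q := by
    intro q hq
    have : Inhabited {b : Bool // b = true → q} := ⟨⟨false, by simp⟩⟩
    obtain ⟨f, hf⟩ := bep {b : Bool // b = true → q} (fun a => a.1 = true)
    obtain ⟨n, hn⟩ := mp (fun n => (f n).1) (by
      intro h
      apply hq
      intro hqq
      exact h (hf ⟨⟨true, fun _ => hqq⟩, rfl⟩))
    exact (f n).2 hn
  intro p
  exact dne (p ∨ ¬p) (fun h => h (Or.inr (fun hp => h (Or.inl hp))))
end

section
/- Countable choice for a type A is equivalent to the conjunction of blurred countable choice for A and countable choice on ℕ: CC_A ↔ (BCC_A ∧ CC_ℕ). More precisely, CC_A implies BCC_A, and BCC_A together with CC_ℕ implies CC_A. -/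
theorem stmt_12 (A : Type*) :
    ((∀ R : ℕ → A → Prop, (∀ n, ∃ x, R n x) → ∃ f : ℕ → A, ∀ n, R n (f n)) →
      (∀ R : ℕ → A → Prop, (∀ n, ∃ x, R n x) → ∃ f : ℕ → A, ∀ n, ∃ m, R n (f m))) ∧
    (((∀ R : ℕ → A → Prop, (∀ n, ∃ x, R n x) → ∃ f : ℕ → A, ∀ n, ∃ m, R n (f m)) ∧
      (∀ R : ℕ → ℕ → Prop, (∀ n, ∃ x, R n x) → ∃ f : ℕ → ℕ, ∀ n, R n (f n))) →
      (∀ R : ℕ → A → Prop, (∀ n, ∃ x, R n x) → ∃ f : ℕ → A, ∀ n, R n (f n))) := by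
  constructor
  · intro cc R h
    obtain ⟨f, hf⟩ := cc R h
    exact ⟨f, fun n => ⟨n, hf n⟩⟩
  · rintro ⟨bcc, ccn⟩ R h
    obtain ⟨f, hf⟩ := bcc R h
    obtain ⟨g, hg⟩ := ccn (fun n m => R n (f m)) hf
    exact ⟨f ∘ g, hg⟩
end

section
/- For any type A, pair-blurred dependent choice BDC²_A implies directed blurred dependent choice DDC_A: if every total relation A² → A → Prop admits a blurred countable total sub-relation, then every directed relation A → A → Prop admits a blurred countable directed sub-relation. -/
theorem stmt_15 (A : Type*)
    (bdc2 : ∀ R : A → A → A → Prop,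
      (∀ x y, ∃ z, R x y z) → ∃ f : ℕ → A, ∀ n m, ∃ k, R (f n) (f m) (f k)) :
    ∀ S : A → A → Prop, (∀ x y, ∃ z, S x z ∧ S y z) →
      ∃ f : ℕ → A, ∀ n m, ∃ k, S (f n) (f k) ∧ S (f m) (f k) := by
  intro S hS
  exact bdc2 (fun x y z => S x z ∧ S y z) hS
end

section
/- The omniscient pair-blurred dependent choice principle OBDC²_A implies each of: pair-blurred dependent choice BDC²_A, the countably blurred drinker paradox BDP_A, and the countably blurred existence principle BEP_A, for any inhabited type A. -/
theorem stmt_16 (A : Type*) [Inhabited A]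
    (obdc : ∀ R : A → A → A → Prop,
      ∃ f : ℕ → A, ((∀ x y, ∃ z, R x y z) ↔ ∀ n m, ∃ k, R (f n) (f m) (f k))) :
    (∀ R : A → A → A → Prop,
      (∀ x y, ∃ z, R x y z) → ∃ f : ℕ → A, ∀ n m, ∃ k, R (f n) (f m) (f k)) ∧
    (∀ P : A → Prop, ∃ f : ℕ → A, ((∀ n, P (f n)) → ∀ x, P x)) ∧
    (∀ P : A → Prop, ∃ f : ℕ → A, ((∃ x, P x) → ∃ n, P (f n))) := by
  refine ⟨fun R hR => ?_, fun P => ?_, fun P => ?_⟩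
  · obtain ⟨f, hf⟩ := obdc R
    exact ⟨f, hf.mp hR⟩
  · obtain ⟨f, hf⟩ := obdc (fun x _ _ => P x)
    refine ⟨f, fun h x => ?_⟩
    obtain ⟨_, hz⟩ := hf.mpr (fun n m => ⟨0, h n⟩) x x
    exact hz
  · obtain ⟨f, hf⟩ := obdc (fun _ _ z => P z)
    refine ⟨f, fun ⟨x, hx⟩ => ?_⟩
    obtain ⟨k, hk⟩ := hf.mp (fun _ _ => ⟨x, hx⟩) 0 0
    exact ⟨k, hk⟩
end

section
/- The Boolean-blurred drinker paradox over all inhabited types implies the law of excluded middle: if for every inhabited A and P : A → Prop there is f : Bool → A with (∀ b, P (f b)) → ∀ x, P x, then every proposition satisfies p ∨ ¬p. -/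
theorem stmt_17
    (bdp : ∀ (A : Type) [Inhabited A] (P : A → Prop),
      ∃ f : Bool → A, ((∀ b, P (f b)) → ∀ x, P x)) :
    ∀ p : Prop, p ∨ ¬p := by
  intro p
  obtain ⟨f, hf⟩ := bdp (PLift p ⊕ Unit)
    (fun x => match x with | .inl _ => False | .inr _ => True)
  match h1 : f true, h2 : f false with
  | .inl h, _ => exact Or.inl h.down
  | _, .inl h => exact Or.inl h.down
  | .inr _, .inr _ =>
    refine Or.inr fun hp => hf (fun b => ?_) (.inl ⟨hp⟩)
    cases b <;> simp [h1, h2]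
end
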